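/- arXiv:2401.00299 — 6 statements merged into one kernel-verified Lean document; each statement's English description precedes it below -/
import Mathlib

section
/- For every real a ≥ 2, e^{1/(2a(a-1))} ≤ 1 + 1/(2a(a-1)) + 1/(6a(a-1)^2). -/
theorem exp_le (a : ℝ) (ha : 2 ≤ a) :
    Real.exp (1 / (2 * a * (a - 1))) ≤
      1 + 1 / (2 * a * (a - 1)) + 1 / (6 * a * (a - 1) ^ 2) := by
  have ht : (4:ℝ) ≤ 2 * a * (a - 1) := by nlinarith
  have ha0 : (0:ℝ) < a := by linarith
  have ha1 : (0:ℝ) < a - 1 := by linarith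
  set x : ℝ := 1 / (2 * a * (a - 1)) with hx
  have hx0 : 0 ≤ x := by positivity
  have hx1 : x ≤ 1 / 4 := by
    rw [hx, div_le_div_iff₀ (by linarith) (by norm_num)]
    linarith
  have h := Real.exp_bound' hx0 (by linarith) (n := 2) (by norm_num)
  simp [Finset.sum_range_succ, Nat.factorial] at h
  have key : x ^ 2 * (2 + 1) / (2 * 2) ≤ 1 / (6 * a * (a - 1) ^ 2) := by
    rw [hx]
    have h2 : (0:ℝ) < 2 * a * (a - 1) := by linarith
    have e : (1 / (2*a*(a-1)))^2 * ((2:ℝ)+1) / (2*2) = 3 / ((2*a*(a-1))^2 * 4) := by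
      field_simp
      ring
    rw [e, div_le_div_iff₀ (mul_pos (pow_pos h2 2) (by norm_num)) (by positivity)]
    nlinarith [mul_nonneg (sq_nonneg (a - 1)) (show (0:ℝ) ≤ 16*a^2 - 18*a by nlinarith)]
  calc Real.exp x ≤ 1 + x + x ^ 2 * (2 + 1) / (2 * 2) := h
    _ ≤ 1 + x + 1 / (6 * a * (a - 1) ^ 2) := by linarith
end

section
/- For every integer a ≥ 2, e·(a-1)^{a-1}/a^{a-1} ≥ (1 + 1/(2a(a-1)) + 1/(6a(a-1)^2))^{a-1} ≥ e^{1/(2a)}. -/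
theorem key_pointwise_ineq (a : ℕ) (ha : 2 ≤ a) :
    Real.exp 1 * ((a : ℝ) - 1) ^ (a - 1) / (a : ℝ) ^ (a - 1) ≥
        (1 + 1 / (2 * (a : ℝ) * ((a : ℝ) - 1)) + 1 / (6 * (a : ℝ) * ((a : ℝ) - 1) ^ 2)) ^ (a - 1)
      ∧
    (1 + 1 / (2 * (a : ℝ) * ((a : ℝ) - 1)) + 1 / (6 * (a : ℝ) * ((a : ℝ) - 1) ^ 2)) ^ (a - 1) ≥
      Real.exp (1 / (2 * (a : ℝ))) := by
  set n : ℕ := a - 1 with hn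
  have hA : (2:ℝ) ≤ (a:ℝ) := by exact_mod_cast ha
  have hA0 : (0:ℝ) < (a:ℝ) := by linarith
  have hB : (1:ℝ) ≤ (a:ℝ) - 1 := by linarith
  have hB0 : (0:ℝ) < (a:ℝ) - 1 := by linarith
  have hncast : ((n:ℝ)) = (a:ℝ) - 1 := by
    have : (n:ℕ) + 1 = a := by omega
    have := congrArg (Nat.cast : ℕ → ℝ) this
    push_cast at this
    linarith
  set x : ℝ := 1 / (2 * (a : ℝ) * ((a : ℝ) - 1)) + 1 / (6 * (a : ℝ) * ((a : ℝ) - 1) ^ 2) with hx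
  have hx0 : 0 ≤ x := by positivity
  have hassoc : 1 + 1 / (2 * (a : ℝ) * ((a : ℝ) - 1)) + 1 / (6 * (a : ℝ) * ((a : ℝ) - 1) ^ 2)
      = 1 + x := by rw [hx]; ring
  rw [hassoc]
  constructor
  · -- (1+x)^n ≤ exp 1 * B^n / A^n
    rw [ge_iff_le, le_div_iff₀ (by positivity)]
    have key : (1 + x) * (a:ℝ) ≤ Real.exp (1 / ((a:ℝ) - 1)) * ((a:ℝ) - 1) := by
      have htaylor : 1 + (1/((a:ℝ)-1)) + (1/((a:ℝ)-1))^2/2 + (1/((a:ℝ)-1))^3/6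
          ≤ Real.exp (1 / ((a:ℝ) - 1)) := by
        have h := Real.sum_le_exp_of_nonneg (x := 1/((a:ℝ)-1)) (by positivity) 4
        have hs : ∑ i ∈ Finset.range 4, (1/((a:ℝ)-1)) ^ i / (Nat.factorial i)
            = 1 + (1/((a:ℝ)-1)) + (1/((a:ℝ)-1))^2/2 + (1/((a:ℝ)-1))^3/6 := by
          norm_num [Finset.sum_range_succ, Nat.factorial]
        rwa [hs] at h
      have heq : (1 + x) * (a:ℝ) =
          (1 + (1/((a:ℝ)-1)) + (1/((a:ℝ)-1))^2/2 + (1/((a:ℝ)-1))^3/6) * ((a:ℝ) - 1) := by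
        rw [hx]; field_simp; ring
      rw [heq]
      exact mul_le_mul_of_nonneg_right htaylor (le_of_lt hB0)
    calc (1 + x) ^ n * (a:ℝ) ^ n = ((1 + x) * (a:ℝ)) ^ n := by rw [mul_pow]
      _ ≤ (Real.exp (1 / ((a:ℝ) - 1)) * ((a:ℝ) - 1)) ^ n := by
          apply pow_le_pow_left₀ (by positivity) key
      _ = Real.exp (1 / ((a:ℝ) - 1)) ^ n * ((a:ℝ) - 1) ^ n := by rw [mul_pow]
      _ = Real.exp 1 * ((a:ℝ) - 1) ^ n := by
          rw [← Real.exp_nat_mul, hncast]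
          field_simp
  · -- (1+x)^n ≥ exp(1/(2a))
    set t : ℝ := 1 / (2 * (a:ℝ) * ((a:ℝ) - 1)) with ht
    have ht0 : 0 ≤ t := by positivity
    have ht1 : t ≤ 1 := by
      rw [ht, div_le_one (by positivity)]
      nlinarith
    have hexp : Real.exp t ≤ 1 + x := by
      have h := Real.exp_bound' ht0 ht1 (n := 2) (by norm_num)
      have h' : Real.exp t ≤ 1 + t + 3 * t ^ 2 / 4 := by
        refine h.trans (le_of_eq ?_)
        norm_num [Finset.sum_range_succ, Nat.factorial]
        ring
      replace h := h'
      refine h.trans ?_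
      rw [hx]
      have h34 : 3 * t ^ 2 / 4 ≤ 1 / (6 * (a:ℝ) * ((a:ℝ) - 1) ^ 2) := by
        have heq : 3 * t ^ 2 / 4 = 3 / (16 * ((a:ℝ) * ((a:ℝ) - 1)) ^ 2) := by
          rw [ht]; field_simp; ring
        rw [heq, div_le_div_iff₀ (by positivity) (by positivity)]
        nlinarith [mul_nonneg (mul_nonneg hA0.le (sq_nonneg ((a:ℝ) - 1)))
          (by linarith : (0:ℝ) ≤ 16 * (a:ℝ) - 18)]
      linarith
    rw [ge_iff_le]
    calc Real.exp (1 / (2 * (a:ℝ)))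
        = Real.exp t ^ n := by
          rw [← Real.exp_nat_mul, hncast, ht]
          congr 1
          field_simp
      _ ≤ (1 + x) ^ n := pow_le_pow_left₀ (Real.exp_pos t).le hexp n
end

section
/- For every d ≥ 1, the number f(d) of partitions of {0,1}^d into subcubes satisfies f(d) ≤ (d+1)^{2^{d-1}}. -/
/-- A subcube of `{0,1}^d`: fix the values of the coordinates in some set `I`
and let the others range freely. -/
def IsSubcube {d : ℕ} (S : Set (Fin d → Bool)) : Prop :=
  ∃ (I : Set (Fin d)) (f : Fin d → Bool), S = {x | ∀ i ∈ I, x i = f i}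

namespace CubePart


attribute [local instance] Classical.propDecidable

variable {d : ℕ}

/-- Flip coordinate `i`. -/
def flip (i : Fin d) (x : Fin d → Bool) : Fin d → Bool := Function.update x i (!x i)

lemma flip_self (i : Fin d) (x : Fin d → Bool) : flip i x i = !x i :=
  Function.update_self _ _ _

lemma flip_ne {i j : Fin d} (h : j ≠ i) (x : Fin d → Bool) : flip i x j = x j :=
  Function.update_of_ne h _ _

lemma flip_flip (i : Fin d) (x : Fin d → Bool) : flip i (flip i x) = x := by
  funext j
  by_cases h : j = i
  · subst h; simp [flip]
  · rw [flip_ne h, flip_ne h]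

lemma flip_inj {i j : Fin d} {x : Fin d → Bool} (h : flip i x = flip j x) : i = j := by
  by_contra hne
  have h1 : flip i x i = !x i := flip_self i x
  have h2 : flip j x i = x i := flip_ne hne x
  rw [h, h2] at h1
  exact Bool.not_ne_self _ h1.symm

/-- Parity of a vertex. -/
noncomputable def par (x : Fin d → Bool) : ZMod 2 := ∑ i, if x i then 1 else 0

lemma par_flip (i : Fin d) (x : Fin d → Bool) : par (flip i x) = par x + 1 := by
  unfold par
  rw [← Finset.sum_erase_add _ _ (Finset.mem_univ i),
    ← Finset.sum_erase_add _ (fun j => if x j then (1 : ZMod 2) else 0) (Finset.mem_univ i)]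
  have hsum : ∑ j ∈ Finset.univ.erase i, (if flip i x j then (1 : ZMod 2) else 0) =
      ∑ j ∈ Finset.univ.erase i, (if x j then (1 : ZMod 2) else 0) := by
    refine Finset.sum_congr rfl fun j hj => ?_
    rw [flip_ne (Finset.ne_of_mem_erase hj)]
  rw [hsum, flip_self, add_assoc]
  congr 1
  cases hb : x i <;> decide

lemma subcube_flip_mem {S : Set (Fin d → Bool)} (hS : IsSubcube S)
    {x y : Fin d → Bool} (hx : x ∈ S) (hy : y ∈ S) (hxy : x ≠ y)
    {z : Fin d → Bool} (hz : z ∈ S) : ∃ i, flip i z ∈ S := by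
  obtain ⟨I, f, rfl⟩ := hS
  have hex : ∃ i, x i ≠ y i := by
    by_contra h; push_neg at h; exact hxy (funext h)
  obtain ⟨i, hi⟩ := hex
  have hiI : i ∉ I := fun hiI => hi ((hx i hiI).trans (hy i hiI).symm)
  refine ⟨i, fun j hj => ?_⟩
  rw [flip_ne (fun h : j = i => hiI (h ▸ hj))]
  exact hz j hj

lemma subcube_eq {S : Set (Fin d → Bool)} (hS : IsSubcube S)
    {o : Fin d → Bool} (ho : o ∈ S) :
    S = {x | ∀ j, flip j o ∉ S → x j = o j} := by
  obtain ⟨I, f, rfl⟩ := hS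
  ext x
  simp only [Set.mem_setOf_eq]
  constructor
  · intro hx j hj
    have hjI : j ∈ I := by
      by_contra hjI
      refine hj fun k hk => ?_
      rw [flip_ne (fun h : k = j => hjI (h ▸ hk))]
      exact ho k hk
    exact (hx j hjI).trans (ho j hjI).symm
  · intro hx j hjI
    by_cases hmem : flip j o ∈ {x | ∀ i ∈ I, x i = f i}
    · exfalso
      have h1 := hmem j hjI
      rw [flip_self] at h1
      have h2 := ho j hjI
      rw [h2] at h1
      exact Bool.not_ne_self _ h1
    · rw [hx j hmem]
      exact ho j hjI

/-- The block of the partition `P` containing `a`. -/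
noncomputable def blk (P : Set (Set (Fin d → Bool))) (a : Fin d → Bool) :
    Set (Fin d → Bool) :=
  if h : ∃ b, b ∈ P ∧ a ∈ b then h.choose else ∅

lemma blk_spec {P : Set (Set (Fin d → Bool))} (hP : Setoid.IsPartition P)
    (a : Fin d → Bool) : blk P a ∈ P ∧ a ∈ blk P a := by
  have h : ∃ b, b ∈ P ∧ a ∈ b := (hP.2 a).exists
  rw [blk, dif_pos h]
  exact h.choose_spec

lemma blk_eq {P : Set (Set (Fin d → Bool))} (hP : Setoid.IsPartition P)
    {a : Fin d → Bool} {b : Set (Fin d → Bool)} (hb : b ∈ P) (hab : a ∈ b) :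
    b = blk P a := by
  obtain ⟨c, _, hu⟩ := hP.2 a
  rw [hu b ⟨hb, hab⟩, hu (blk P a) ⟨(blk_spec hP a).1, (blk_spec hP a).2⟩]

/-- A canonical odd vertex of a set (when one exists). -/
noncomputable def oddRep (S : Set (Fin d → Bool)) : Fin d → Bool :=
  if h : ∃ x, x ∈ S ∧ par x = 1 then h.choose else fun _ => false

lemma oddRep_spec {S : Set (Fin d → Bool)} (h : ∃ x, x ∈ S ∧ par x = 1) :
    oddRep S ∈ S ∧ par (oddRep S) = 1 := by
  rw [oddRep, dif_pos h]
  exact h.choose_spec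

/-- The encoding of the partition: each vertex adjacent (within its block) to the
canonical odd vertex of its block records the differing coordinate. -/
noncomputable def code (P : Set (Set (Fin d → Bool))) (v : Fin d → Bool) :
    Option (Fin d) :=
  if h : ∃ i : Fin d, flip i v = oddRep (blk P v) ∧ flip i v ∈ blk P v then some h.choose
  else none

set_option maxHeartbeats 1000000 in
lemma code_eq_some {P : Set (Set (Fin d → Bool))} (hP : Setoid.IsPartition P)
    (o : Fin d → Bool) (i : Fin d) :
    code P (flip i o) = some i ↔ oddRep (blk P o) = o ∧ flip i o ∈ blk P o := by
  set v := flip i o with hv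
  have hvo : flip i v = o := flip_flip i o
  constructor
  · intro hc
    by_cases h : ∃ j : Fin d, flip j v = oddRep (blk P v) ∧ flip j v ∈ blk P v
    · rw [code, dif_pos h] at hc
      have hi : h.choose = i := by injection hc
      obtain ⟨h1, h2⟩ := h.choose_spec
      rw [hi, hvo] at h1 h2
      have hbb : blk P v = blk P o := blk_eq hP (blk_spec hP v).1 h2
      refine ⟨by rw [← hbb, ← h1], ?_⟩
      rw [← hbb]
      exact (blk_spec hP v).2
    · rw [code, dif_neg h] at hc
      cases hc
  · rintro ⟨h1, h2⟩
    have hbb : blk P v = blk P o := (blk_eq hP (blk_spec hP o).1 h2).symm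
    have hex : ∃ j : Fin d, flip j v = oddRep (blk P v) ∧ flip j v ∈ blk P v := by
      refine ⟨i, ?_, ?_⟩
      · rw [hvo, hbb, h1]
      · rw [hvo, hbb]
        exact (blk_spec hP o).2
    rw [code, dif_pos hex]
    congr 1
    obtain ⟨hj1, _⟩ := hex.choose_spec
    refine flip_inj (x := v) ?_
    rw [hj1, hbb, h1, hvo]

lemma mem_of_two {P P' : Set (Set (Fin d → Bool))}
    (hP : Setoid.IsPartition P) (hP' : Setoid.IsPartition P')
    (hC' : ∀ S ∈ P', IsSubcube S)
    (hcode : ∀ v : Fin d → Bool, par v = 0 → code P v = code P' v)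
    {S : Set (Fin d → Bool)} (hSP : S ∈ P) (hsub : IsSubcube S)
    {x y : Fin d → Bool} (hx : x ∈ S) (hy : y ∈ S) (hxy : x ≠ y) : S ∈ P' := by
  obtain ⟨i0, hi0⟩ := subcube_flip_mem hsub hx hy hxy hx
  have hZ : ∀ a : ZMod 2, a = 0 ∨ a = 1 := by decide
  have hodd : ∃ z, z ∈ S ∧ par z = 1 := by
    rcases hZ (par x) with h | h
    · exact ⟨flip i0 x, hi0, by rw [par_flip, h]; decide⟩
    · exact ⟨x, hx, h⟩
  set o := oddRep S with ho
  obtain ⟨hoS, hop⟩ := oddRep_spec hodd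
  have hSb : S = blk P o := blk_eq hP hSP hoS
  have hevenflip : ∀ i : Fin d, par (flip i o) = 0 := fun i => by
    rw [par_flip, hop]; decide
  have keyP : ∀ i : Fin d, code P (flip i o) = some i ↔ flip i o ∈ S := by
    intro i
    rw [code_eq_some hP o i, ← hSb]
    exact ⟨fun h => h.2, fun h => ⟨ho.symm, h⟩⟩
  have hB' := blk_spec hP' o
  have hcode_o : ∀ i : Fin d, code P' (flip i o) = code P (flip i o) := fun i =>
    (hcode _ (hevenflip i)).symm
  obtain ⟨i1, hi1⟩ : ∃ i, flip i o ∈ S := subcube_flip_mem hsub hx hy hxy hoS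
  have hc1 : code P' (flip i1 o) = some i1 := by
    rw [hcode_o]
    exact (keyP i1).mpr hi1
  obtain ⟨hrep', _⟩ := (code_eq_some hP' o i1).mp hc1
  have keyP' : ∀ i : Fin d, code P' (flip i o) = some i ↔ flip i o ∈ blk P' o := by
    intro i
    rw [code_eq_some hP' o i]
    exact ⟨fun h => h.2, fun h => ⟨hrep', h⟩⟩
  have hmem_iff : ∀ i : Fin d, (flip i o ∈ S ↔ flip i o ∈ blk P' o) := by
    intro i
    rw [← keyP i, ← keyP' i, hcode_o i]
  have hfin : S = blk P' o := by
    rw [subcube_eq hsub hoS, subcube_eq (hC' _ hB'.1) hB'.2]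
    ext z
    simp only [Set.mem_setOf_eq]
    constructor <;> intro h j hj
    · exact h j fun hs => hj ((hmem_iff j).mp hs)
    · exact h j fun hs => hj ((hmem_iff j).mpr hs)
  rw [hfin]
  exact hB'.1

lemma code_subset {P P' : Set (Set (Fin d → Bool))}
    (hP : Setoid.IsPartition P) (hP' : Setoid.IsPartition P')
    (hC : ∀ S ∈ P, IsSubcube S) (hC' : ∀ S ∈ P', IsSubcube S)
    (hcode : ∀ v : Fin d → Bool, par v = 0 → code P v = code P' v) : P ⊆ P' := by
  intro S hSP
  have hne : S.Nonempty :=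
    Set.nonempty_iff_ne_empty.mpr fun h => hP.1 (h ▸ hSP)
  obtain ⟨x, hx⟩ := hne
  by_cases h2 : ∃ y ∈ S, y ≠ x
  · obtain ⟨y, hy, hyx⟩ := h2
    exact mem_of_two hP hP' hC' hcode hSP (hC S hSP) hy hx hyx
  · push_neg at h2
    have hSx : S = {x} := Set.eq_singleton_iff_unique_mem.mpr ⟨hx, h2⟩
    have hB' := blk_spec hP' x
    have hB'x : blk P' x = {x} := by
      by_contra hne'
      have hex : ∃ y ∈ blk P' x, y ≠ x := by
        by_contra hc
        push_neg at hc
        exact hne' (Set.eq_singleton_iff_unique_mem.mpr ⟨hB'.2, hc⟩)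
      obtain ⟨y, hy, hyx⟩ := hex
      have hmem : blk P' x ∈ P :=
        mem_of_two hP' hP hC (fun v hv => (hcode v hv).symm) hB'.1
          (hC' _ hB'.1) hy hB'.2 hyx
      have h1 : blk P' x = blk P x := blk_eq hP hmem hB'.2
      have h2' : S = blk P x := blk_eq hP hSP hx
      have : y ∈ S := by rw [h2', ← h1]; exact hy
      rw [hSx] at this
      exact hyx this
    rw [hSx, ← hB'x]
    exact hB'.1

lemma card_even (hd : 1 ≤ d) :
    Nat.card {v : Fin d → Bool // par v = 0} = 2 ^ (d - 1) := by
  classical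
  let i0 : Fin d := ⟨0, hd⟩
  let e1 : {v : Fin d → Bool // par v = 0} ≃ {v : Fin d → Bool // par v = 1} :=
    { toFun := fun v => ⟨flip i0 v.1, by rw [par_flip, v.2]; decide⟩
      invFun := fun v => ⟨flip i0 v.1, by rw [par_flip, v.2]; decide⟩
      left_inv := fun v => Subtype.ext (flip_flip i0 v.1)
      right_inv := fun v => Subtype.ext (flip_flip i0 v.1) }
  let e2 : {v : Fin d → Bool // par v = 1} ≃ {v : Fin d → Bool // ¬ par v = 0} :=
    Equiv.subtypeEquivRight fun v => by
      have h : ∀ a : ZMod 2, a = 1 ↔ ¬ a = 0 := by decide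
      exact h _
  have hsum := Fintype.card_congr (Equiv.sumCompl (fun v : Fin d → Bool => par v = 0))
  rw [Fintype.card_sum] at hsum
  have hX : Fintype.card (Fin d → Bool) = 2 ^ d := by
    simp [Fintype.card_fun]
  have heq : Fintype.card {v : Fin d → Bool // par v = 0} =
      Fintype.card {v : Fin d → Bool // ¬ par v = 0} :=
    Fintype.card_congr (e1.trans e2)
  have hpow : 2 ^ d = 2 * 2 ^ (d - 1) := by
    conv_lhs => rw [show d = (d - 1) + 1 by omega]
    rw [pow_succ]
    ring
  rw [Nat.card_eq_fintype_card]
  omega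

end CubePart

open CubePart in
theorem card_subcube_partitions_le (d : ℕ) (hd : 1 ≤ d) :
    Nat.card {P : Set (Set (Fin d → Bool)) //
      Setoid.IsPartition P ∧ ∀ S ∈ P, IsSubcube S} ≤ (d + 1) ^ 2 ^ (d - 1) := by
  classical
  have hinj : Function.Injective
      (fun (Q : {P : Set (Set (Fin d → Bool)) //
          Setoid.IsPartition P ∧ ∀ S ∈ P, IsSubcube S}) =>
        (fun v : {v : Fin d → Bool // par v = 0} => code Q.1 v.1)) := by
    intro Q1 Q2 h
    apply Subtype.ext
    have hc : ∀ v : Fin d → Bool, par v = 0 → code Q1.1 v = code Q2.1 v := fun v hv =>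
      congrFun h ⟨v, hv⟩
    exact Set.Subset.antisymm
      (code_subset Q1.2.1 Q2.2.1 Q1.2.2 Q2.2.2 hc)
      (code_subset Q2.2.1 Q1.2.1 Q2.2.2 Q1.2.2 fun v hv => (hc v hv).symm)
  have hle := Nat.card_le_card_of_injective _ hinj
  have hcard : Nat.card ({v : Fin d → Bool // par v = 0} → Option (Fin d)) =
      (d + 1) ^ 2 ^ (d - 1) := by
    rw [Nat.card_fun, card_even hd]
    congr 1
    rw [Nat.card_eq_fintype_card]
    simp
  rw [hcard] at hle
  exact hle
end

section
/- Let G be a bipartite graph with vertex classes of size b in which every vertex has degree at most a. Then for every 0 ≤ t ≤ b, the number of matchings of G with exactly b−t edges is at most C(b,t)^2 · (a!)^{(b−t)/a}, assuming the Bregman–Minc inequality (the number of perfect matchings of a bipartite graph with b vertices per side, all degrees at most a, and b divisible by a is at most (a!)^{b/a}). -/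
namespace DefectBound

open SimpleGraph

instance subgraphFinite {V : Type*} [Finite V] (G : SimpleGraph V) : Finite G.Subgraph := by
  have : Finite (Set V × (V → V → Prop)) := by infer_instance
  apply Finite.of_injective (fun M : G.Subgraph => (M.verts, M.Adj))
  intro M N h
  have h1 : M.verts = N.verts := congrArg Prod.fst h
  have h2 : M.Adj = N.Adj := congrArg Prod.snd h
  ext x y
  · rw [h1]
  · rw [h2]

/-- Bipartite graph on `Fin m ⊕ Fin m` from a relation. -/
def bipLift {m : ℕ} (R : Fin m → Fin m → Prop) : SimpleGraph (Fin m ⊕ Fin m) where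
  Adj x y := match x, y with
    | .inl u, .inr v => R u v
    | .inr v, .inl u => R u v
    | _, _ => False
  symm := ⟨by rintro (u|u) (v|v) h <;> first | exact h.elim | exact h⟩
  loopless := ⟨by rintro (u|u) h <;> exact h⟩

variable {m : ℕ} {R : Fin m → Fin m → Prop}

lemma bipLift_adj_inl_inr {u v : Fin m} : (bipLift R).Adj (.inl u) (.inr v) ↔ R u v := Iff.rfl

lemma bipLift_not_adj_inl_inl (u v : Fin m) : ¬ (bipLift R).Adj (.inl u) (.inl v) := fun h => h

lemma bipLift_not_adj_inr_inr (u v : Fin m) : ¬ (bipLift R).Adj (.inr u) (.inr v) := fun h => h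

lemma bipLift_neighborSet_inl (u : Fin m) :
    (bipLift R).neighborSet (.inl u) = Sum.inr '' {v | R u v} := by
  ext (w|w)
  · simp only [mem_neighborSet]
    constructor
    · exact fun h => (bipLift_not_adj_inl_inl u w h).elim
    · rintro ⟨v, _, ⟨⟩⟩
  · simp only [mem_neighborSet, Set.mem_image]
    exact ⟨fun h => ⟨w, h, rfl⟩, by rintro ⟨v, hv, ⟨⟩⟩; exact hv⟩

lemma bipLift_neighborSet_inr (v : Fin m) :
    (bipLift R).neighborSet (.inr v) = Sum.inl '' {u | R u v} := by
  ext (w|w)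
  · simp only [mem_neighborSet, Set.mem_image]
    exact ⟨fun h => ⟨w, h, rfl⟩, by rintro ⟨u, hu, ⟨⟩⟩; exact hu⟩
  · simp only [mem_neighborSet]
    constructor
    · exact fun h => (bipLift_not_adj_inr_inr v w h).elim
    · rintro ⟨v, _, ⟨⟩⟩

/-- A spanning subgraph of `bipLift R` from a subrelation. -/
def bipSub (R : Fin m → Fin m → Prop) (S : Fin m → Fin m → Prop) (h : ∀ u v, S u v → R u v) :
    (bipLift R).Subgraph where
  verts := Set.univ
  Adj x y := match x, y with
    | .inl u, .inr v => S u v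
    | .inr v, .inl u => S u v
    | _, _ => False
  adj_sub := by rintro (u|u) (v|v) hadj <;> first | exact hadj.elim | exact h _ _ hadj
  edge_vert _ := Set.mem_univ _
  symm := ⟨by rintro (u|u) (v|v) h' <;> first | exact h'.elim | exact h'⟩

variable {S : Fin m → Fin m → Prop} {hRS : ∀ u v, S u v → R u v}

lemma bipSub_adj_inl_inr {u v : Fin m} : (bipSub R S hRS).Adj (.inl u) (.inr v) ↔ S u v := Iff.rfl

lemma bipSub_isPerfectMatching (h1 : ∀ u, ∃! v, S u v) (h2 : ∀ v, ∃! u, S u v) :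
    (bipSub R S hRS).IsPerfectMatching := by
  constructor
  · rintro (u|u) -
    · obtain ⟨v, hv, hv'⟩ := h1 u
      refine ⟨.inr v, hv, ?_⟩
      rintro (w|w) hw
      · exact hw.elim
      · exact congrArg _ (hv' w hw)
    · obtain ⟨v, hv, hv'⟩ := h2 u
      refine ⟨.inl v, hv, ?_⟩
      rintro (w|w) hw
      · exact congrArg _ (hv' w hw)
      · exact hw.elim
  · intro v; exact Set.mem_univ _

/-- unique partner, for any perfect matching of a `bipLift`. -/
lemma pm_exu_left {M : (bipLift R).Subgraph} (h : M.IsPerfectMatching) (u : Fin m) :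
    ∃! v, M.Adj (.inl u) (.inr v) := by
  obtain ⟨w, hw, hw'⟩ := h.1 (h.2 (.inl u))
  obtain (v|v) := w
  · exact ((bipLift_not_adj_inl_inl u v) (M.adj_sub hw)).elim
  · exact ⟨v, hw, fun y hy => Sum.inr.inj (hw' _ hy)⟩

lemma pm_exu_right {M : (bipLift R).Subgraph} (h : M.IsPerfectMatching) (v : Fin m) :
    ∃! u, M.Adj (.inl u) (.inr v) := by
  obtain ⟨w, hw, hw'⟩ := h.1 (h.2 (.inr v))
  obtain (u|u) := w
  · refine ⟨u, M.adj_symm hw, fun y hy => Sum.inl.inj (hw' _ (M.adj_symm hy))⟩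
  · exact ((bipLift_not_adj_inr_inr v u) (M.adj_sub hw)).elim

lemma pm_ext {M N : (bipLift R).Subgraph} (hM : M.IsPerfectMatching) (hN : N.IsPerfectMatching)
    (h : ∀ u v, M.Adj (.inl u) (.inr v) ↔ N.Adj (.inl u) (.inr v)) : M = N := by
  ext x y
  · rw [hM.2.verts_eq_univ, hN.2.verts_eq_univ]
  · obtain (u|u) := x <;> obtain (v|v) := y
    · exact ⟨fun hadj => ((bipLift_not_adj_inl_inl u v) (M.adj_sub hadj)).elim,
        fun hadj => ((bipLift_not_adj_inl_inl u v) (N.adj_sub hadj)).elim⟩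
    · exact h u v
    · rw [M.adj_comm, N.adj_comm]; exact h v u
    · exact ⟨fun hadj => ((bipLift_not_adj_inr_inr u v) (M.adj_sub hadj)).elim,
        fun hadj => ((bipLift_not_adj_inr_inr u v) (N.adj_sub hadj)).elim⟩

end DefectBound
namespace DefectBoundB
open SimpleGraph DefectBound

lemma BM_general (a : ℕ) (ha : 1 ≤ a)
    (hBM : ∀ (a' b' : ℕ) (H : SimpleGraph (Fin b' ⊕ Fin b')),
      (∀ u v, ¬ H.Adj (Sum.inl u) (Sum.inl v)) →
      (∀ u v, ¬ H.Adj (Sum.inr u) (Sum.inr v)) →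
      (∀ v, (H.neighborSet v).ncard ≤ a') → a' ∣ b' →
      (Nat.card {M : H.Subgraph // M.IsPerfectMatching} : ℝ) ≤
        (a'.factorial : ℝ) ^ ((b' : ℝ) / a'))
    (n : ℕ) (R : Fin n → Fin n → Prop)
    (hd1 : ∀ u, {v | R u v}.ncard ≤ a) (hd2 : ∀ v, {u | R u v}.ncard ≤ a) :
    (Nat.card {M : (bipLift R).Subgraph // M.IsPerfectMatching} : ℝ) ≤
      (a.factorial : ℝ) ^ ((n : ℝ) / a) := by
  classical
  have ha0 : (0:ℝ) < a := by exact_mod_cast ha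
  let e : Fin (a * n) ≃ Fin a × Fin n := finProdFinEquiv.symm
  let R' : Fin (a * n) → Fin (a * n) → Prop :=
    fun x y => (e x).1 = (e y).1 ∧ R (e x).2 (e y).2
  have hd1' : ∀ x, {y | R' x y}.ncard ≤ a := by
    intro x
    calc {y | R' x y}.ncard ≤ {v | R (e x).2 v}.ncard := by
          apply Set.ncard_le_ncard_of_injOn (fun y => (e y).2)
          · exact fun y hy => hy.2
          · intro y hy y' hy' hsnd
            exact e.injective (Prod.ext (hy.1.symm.trans hy'.1) hsnd)
      _ ≤ a := hd1 _
  have hd2' : ∀ y, {x | R' x y}.ncard ≤ a := by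
    intro y
    calc {x | R' x y}.ncard ≤ {u | R u (e y).2}.ncard := by
          apply Set.ncard_le_ncard_of_injOn (fun x => (e x).2)
          · exact fun x hx => hx.2
          · intro x hx x' hx' hsnd
            exact e.injective (Prod.ext (hx.1.trans hx'.1.symm) hsnd)
      _ ≤ a := hd2 _
  have hdeg' : ∀ v, ((bipLift R').neighborSet v).ncard ≤ a := by
    rintro (u|u)
    · rw [bipLift_neighborSet_inl, Set.ncard_image_of_injective _ Sum.inr_injective]
      exact hd1' u
    · rw [bipLift_neighborSet_inr, Set.ncard_image_of_injective _ Sum.inl_injective]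
      exact hd2' u
  -- the injection from (Fin a → pm) to pm of blow-up
  let S' : (Fin a → {M : (bipLift R).Subgraph // M.IsPerfectMatching}) →
      Fin (a * n) → Fin (a * n) → Prop :=
    fun f x y => (e x).1 = (e y).1 ∧ (f (e x).1).1.Adj (.inl (e x).2) (.inr (e y).2)
  have hsub : ∀ f, ∀ x y, S' f x y → R' x y :=
    fun f x y h => ⟨h.1, (f (e x).1).1.adj_sub h.2⟩
  have hpm : ∀ f, (bipSub R' (S' f) (hsub f)).IsPerfectMatching := by
    intro f
    apply bipSub_isPerfectMatching
    · intro x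
      obtain ⟨v, hv, hv'⟩ := pm_exu_left (f (e x).1).2 (e x).2
      refine ⟨e.symm ((e x).1, v), ⟨by simp, by simpa using hv⟩, ?_⟩
      intro y hy
      have h1 : (e y).1 = (e x).1 := hy.1.symm
      have h2 : (e y).2 = v := hv' _ hy.2
      apply e.injective
      rw [e.apply_symm_apply]
      exact Prod.ext h1 h2
    · intro y
      obtain ⟨u, hu, hu'⟩ := pm_exu_right (f (e y).1).2 (e y).2
      refine ⟨e.symm ((e y).1, u), ⟨by simp, by simpa using hu⟩, ?_⟩
      intro x hx
      have h1 : (e x).1 = (e y).1 := hx.1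
      have h2 : (e x).2 = u := by
        have hx2 := hx.2
        rw [h1] at hx2
        exact hu' _ hx2
      apply e.injective
      rw [e.apply_symm_apply]
      exact Prod.ext h1 h2
  have key : Nat.card {M : (bipLift R).Subgraph // M.IsPerfectMatching} ^ a ≤
      Nat.card {M : (bipLift R').Subgraph // M.IsPerfectMatching} := by
    have hc : Nat.card (Fin a → {M : (bipLift R).Subgraph // M.IsPerfectMatching}) =
        Nat.card {M : (bipLift R).Subgraph // M.IsPerfectMatching} ^ a := by
      rw [Nat.card_fun, Nat.card_eq_fintype_card (α := Fin a), Fintype.card_fin]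
    rw [← hc]
    apply Nat.card_le_card_of_injective (f := fun f => ⟨bipSub R' (S' f) (hsub f), hpm f⟩)
    intro f g hfg
    funext k
    apply Subtype.ext
    apply pm_ext (f k).2 (g k).2
    intro u v
    have h2 := congrArg (fun M => M.1.Adj (.inl (e.symm (k, u))) (.inr (e.symm (k, v)))) hfg
    simp only [bipSub_adj_inl_inr] at h2
    have h3 : ∀ h : Fin a → {M : (bipLift R).Subgraph // M.IsPerfectMatching},
        S' h (e.symm (k, u)) (e.symm (k, v)) ↔ (h k).1.Adj (.inl u) (.inr v) := by
      intro h
      simp [S', e.apply_symm_apply]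
    rw [h3 f, h3 g] at h2
    exact h2.to_iff
  have hbm' := hBM a (a * n) (bipLift R') (bipLift_not_adj_inl_inl) (bipLift_not_adj_inr_inr)
    hdeg' ⟨n, rfl⟩
  have hcast : ((a * n : ℕ) : ℝ) / a = (n : ℝ) := by push_cast; field_simp
  rw [hcast] at hbm'
  set N := Nat.card {M : (bipLift R).Subgraph // M.IsPerfectMatching}
  have hN : (0:ℝ) ≤ (N : ℝ) := Nat.cast_nonneg _
  have hkey : ((N : ℝ)) ^ (a:ℝ) ≤ (a.factorial : ℝ) ^ (n : ℝ) := by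
    rw [Real.rpow_natCast]
    calc ((N : ℝ)) ^ a ≤ (Nat.card {M : (bipLift R').Subgraph // M.IsPerfectMatching} : ℝ) := by
          exact_mod_cast key
      _ ≤ _ := hbm'
  have h1 : (N : ℝ) = ((N : ℝ) ^ (a:ℝ)) ^ (1/(a:ℝ)) := by
    rw [← Real.rpow_mul hN, mul_one_div, div_self ha0.ne', Real.rpow_one]
  have h2 : ((a.factorial:ℝ) ^ (n:ℝ)) ^ (1/(a:ℝ)) = (a.factorial:ℝ) ^ ((n:ℝ)/a) := by
    rw [← Real.rpow_mul (by positivity), mul_one_div]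
  rw [h1, ← h2]
  exact Real.rpow_le_rpow (by positivity) hkey (by positivity)

end DefectBoundB
namespace DefectBoundC
open SimpleGraph DefectBound

lemma matching_left_card {b : ℕ} {G : SimpleGraph (Fin b ⊕ Fin b)}
    (hbip₁ : ∀ u v, ¬ G.Adj (Sum.inl u) (Sum.inl v))
    (hbip₂ : ∀ u v, ¬ G.Adj (Sum.inr u) (Sum.inr v))
    {M : G.Subgraph} (hM : M.IsMatching) :
    Nat.card {u : Fin b // Sum.inl u ∈ M.verts} = M.edgeSet.ncard := by
  classical
  rw [← Nat.card_coe_set_eq]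
  apply Nat.card_eq_of_bijective (fun u => hM.toEdge ⟨.inl u.1, u.2⟩)
  constructor
  · rintro ⟨u, hu⟩ ⟨u', hu'⟩ hne
    obtain ⟨w, hw, -⟩ := hM hu
    obtain ⟨w', hw', -⟩ := hM hu'
    have hne2 : hM.toEdge ⟨Sum.inl u, hu⟩ = hM.toEdge ⟨Sum.inl u', hu'⟩ := hne
    rw [hM.toEdge_eq_of_adj hw, hM.toEdge_eq_of_adj hw'] at hne2
    have h2 := Subtype.mk_eq_mk.mp hne2
    rw [Sym2.eq_iff] at h2
    obtain ⟨h3, -⟩ | ⟨h3, h4⟩ := h2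
    · exact Subtype.ext (Sum.inl.inj h3)
    · exfalso
      rw [← h3] at hw'
      exact hbip₁ u' u (M.adj_sub hw')
  · rintro ⟨x, hx⟩
    induction x with
    | _ v w =>
      rw [Subgraph.mem_edgeSet] at hx
      obtain (u|u) := v <;> obtain (v|v) := w
      · exact (hbip₁ _ _ (M.adj_sub hx)).elim
      · exact ⟨⟨u, M.edge_vert hx⟩, hM.toEdge_eq_of_adj hx⟩
      · refine ⟨⟨v, M.edge_vert (M.adj_symm hx)⟩, ?_⟩
        show hM.toEdge ⟨Sum.inl v, _⟩ = _
        rw [hM.toEdge_eq_of_adj (M.adj_symm hx)]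
        exact Subtype.ext (Sym2.eq_swap)
      · exact (hbip₂ _ _ (M.adj_sub hx)).elim

lemma matching_right_card {b : ℕ} {G : SimpleGraph (Fin b ⊕ Fin b)}
    (hbip₁ : ∀ u v, ¬ G.Adj (Sum.inl u) (Sum.inl v))
    (hbip₂ : ∀ u v, ¬ G.Adj (Sum.inr u) (Sum.inr v))
    {M : G.Subgraph} (hM : M.IsMatching) :
    Nat.card {v : Fin b // Sum.inr v ∈ M.verts} = M.edgeSet.ncard := by
  classical
  rw [← Nat.card_coe_set_eq]
  apply Nat.card_eq_of_bijective (fun u => hM.toEdge ⟨.inr u.1, u.2⟩)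
  constructor
  · rintro ⟨u, hu⟩ ⟨u', hu'⟩ hne
    obtain ⟨w, hw, -⟩ := hM hu
    obtain ⟨w', hw', -⟩ := hM hu'
    have hne2 : hM.toEdge ⟨Sum.inr u, hu⟩ = hM.toEdge ⟨Sum.inr u', hu'⟩ := hne
    rw [hM.toEdge_eq_of_adj hw, hM.toEdge_eq_of_adj hw'] at hne2
    have h2 := Subtype.mk_eq_mk.mp hne2
    rw [Sym2.eq_iff] at h2
    obtain ⟨h3, -⟩ | ⟨h3, h4⟩ := h2
    · exact Subtype.ext (Sum.inr.inj h3)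
    · exfalso
      rw [← h3] at hw'
      exact hbip₂ u' u (M.adj_sub hw')
  · rintro ⟨x, hx⟩
    induction x with
    | _ v w =>
      rw [Subgraph.mem_edgeSet] at hx
      obtain (u|u) := v <;> obtain (v|v) := w
      · exact (hbip₁ _ _ (M.adj_sub hx)).elim
      · refine ⟨⟨v, M.edge_vert (M.adj_symm hx)⟩, ?_⟩
        show hM.toEdge ⟨Sum.inr v, _⟩ = _
        rw [hM.toEdge_eq_of_adj (M.adj_symm hx)]
        exact Subtype.ext (Sym2.eq_swap)
      · exact ⟨⟨u, M.edge_vert hx⟩, hM.toEdge_eq_of_adj hx⟩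
      · exact (hbip₂ _ _ (M.adj_sub hx)).elim

end DefectBoundC
open DefectBound DefectBoundB DefectBoundC in
theorem matchings_with_defect_bound (a b t : ℕ) (ha : 1 ≤ a) (ht : t ≤ b)
    (G : SimpleGraph (Fin b ⊕ Fin b))
    (hbip₁ : ∀ u v, ¬ G.Adj (Sum.inl u) (Sum.inl v))
    (hbip₂ : ∀ u v, ¬ G.Adj (Sum.inr u) (Sum.inr v))
    (hdeg : ∀ v, (G.neighborSet v).ncard ≤ a)
    (hBM : ∀ (a' b' : ℕ) (H : SimpleGraph (Fin b' ⊕ Fin b')),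
      (∀ u v, ¬ H.Adj (Sum.inl u) (Sum.inl v)) →
      (∀ u v, ¬ H.Adj (Sum.inr u) (Sum.inr v)) →
      (∀ v, (H.neighborSet v).ncard ≤ a') → a' ∣ b' →
      (Nat.card {M : H.Subgraph // M.IsPerfectMatching} : ℝ) ≤
        (a'.factorial : ℝ) ^ ((b' : ℝ) / a')) :
    (Nat.card {M : G.Subgraph // M.IsMatching ∧ M.edgeSet.ncard = b - t} : ℝ) ≤
      (b.choose t : ℝ) ^ 2 * (a.factorial : ℝ) ^ (((b : ℝ) - t) / a) := by
  classical
  set n := b - t with hn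
  have hexp : ((b:ℝ) - t) = ((n : ℕ) : ℝ) := by rw [hn, Nat.cast_sub ht]
  rw [hexp]
  letI : Fintype {M : G.Subgraph // M.IsMatching ∧ M.edgeSet.ncard = b - t} :=
    Fintype.ofFinite _
  set X := {M : G.Subgraph // M.IsMatching ∧ M.edgeSet.ncard = b - t} with hX
  -- uncovered sets have cardinality t
  have huncovL : ∀ M : X, (Finset.univ.filter fun u : Fin b => Sum.inl u ∉ M.1.verts).card = t := by
    intro M
    have h1 := matching_left_card hbip₁ hbip₂ M.2.1
    rw [M.2.2] at h1
    have hL : Nat.card { u : Fin b // Sum.inl u ∈ M.1.verts }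
        = (Finset.univ.filter fun u : Fin b => Sum.inl u ∈ M.1.verts).card := by
      rw [Nat.card_eq_fintype_card, Fintype.card_subtype]
    have h2 := Finset.card_filter_add_card_filter_not
      (s := (Finset.univ : Finset (Fin b))) (p := fun u : Fin b => Sum.inl u ∈ M.1.verts)
    rw [Finset.card_univ, Fintype.card_fin] at h2
    omega
  have huncovR : ∀ M : X, (Finset.univ.filter fun v : Fin b => Sum.inr v ∉ M.1.verts).card = t := by
    intro M
    have h1 := matching_right_card hbip₁ hbip₂ M.2.1
    rw [M.2.2] at h1
    have hR : Nat.card { v : Fin b // Sum.inr v ∈ M.1.verts }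
        = (Finset.univ.filter fun v : Fin b => Sum.inr v ∈ M.1.verts).card := by
      rw [Nat.card_eq_fintype_card, Fintype.card_subtype]
    have h2 := Finset.card_filter_add_card_filter_not
      (s := (Finset.univ : Finset (Fin b))) (p := fun v : Fin b => Sum.inr v ∈ M.1.verts)
    rw [Finset.card_univ, Fintype.card_fin] at h2
    omega
  set P : Finset (Finset (Fin b) × Finset (Fin b)) :=
    (Finset.univ.powersetCard t) ×ˢ (Finset.univ.powersetCard t) with hP
  set π : X → Finset (Fin b) × Finset (Fin b) :=
    fun M => (Finset.univ.filter fun u : Fin b => Sum.inl u ∉ M.1.verts,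
              Finset.univ.filter fun v : Fin b => Sum.inr v ∉ M.1.verts) with hπ
  have hπP : ∀ M : X, π M ∈ P := by
    intro M
    rw [hP, Finset.mem_product, Finset.mem_powersetCard_univ, Finset.mem_powersetCard_univ]
    exact ⟨huncovL M, huncovR M⟩
  have hcount : (Finset.univ : Finset X).card
      = ∑ p ∈ P, ((Finset.univ : Finset X).filter fun M => π M = p).card :=
    Finset.card_eq_sum_card_fiberwise (fun x _ => hπP x)
  -- fiber bound
  have hfiber : ∀ p ∈ P,
      ((((Finset.univ : Finset X).filter fun M => π M = p).card : ℝ)) ≤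
        (a.factorial : ℝ) ^ ((n : ℝ) / a) := by
    rintro ⟨S, T⟩ hp
    rw [hP, Finset.mem_product, Finset.mem_powersetCard_univ, Finset.mem_powersetCard_univ] at hp
    obtain ⟨hS, hT⟩ := hp
    have hcS : (Sᶜ).card = n := by rw [Finset.card_compl, hS, Fintype.card_fin]
    have hcT : (Tᶜ).card = n := by rw [Finset.card_compl, hT, Fintype.card_fin]
    set eS := Sᶜ.orderIsoOfFin hcS with heS
    set eT := Tᶜ.orderIsoOfFin hcT with heT
    set R : Fin n → Fin n → Prop :=
      fun i j => G.Adj (Sum.inl (eS i : Fin b)) (Sum.inr (eT j : Fin b)) with hR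
    have hd1 : ∀ i, {j | R i j}.ncard ≤ a := by
      intro i
      refine le_trans (Set.ncard_le_ncard_of_injOn
        (fun j => (Sum.inr (eT j : Fin b) : Fin b ⊕ Fin b)) ?_ ?_) (hdeg (Sum.inl (eS i : Fin b)))
      · exact fun j hj => hj
      · intro j _ j' _ hjj
        exact eT.injective (Subtype.ext (Sum.inr.inj hjj))
    have hd2 : ∀ j, {i | R i j}.ncard ≤ a := by
      intro j
      refine le_trans (Set.ncard_le_ncard_of_injOn
        (fun i => (Sum.inl (eS i : Fin b) : Fin b ⊕ Fin b)) ?_ ?_) (hdeg (Sum.inr (eT j : Fin b)))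
      · exact fun i hi => G.adj_symm hi
      · intro i _ i' _ hii
        exact eS.injective (Subtype.ext (Sum.inl.inj hii))
    -- membership characterizations
    have hSmem : ∀ M : X, π M = (S, T) → ∀ u : Fin b, (Sum.inl u ∈ M.1.verts ↔ u ∈ Sᶜ) := by
      intro M hMp u
      have h1 : (Finset.univ.filter fun u : Fin b => Sum.inl u ∉ M.1.verts) = S :=
        congrArg Prod.fst hMp
      rw [Finset.mem_compl, ← h1, Finset.mem_filter]
      constructor
      · intro h h2; exact h2.2 h
      · intro h; by_contra h2; exact h ⟨Finset.mem_univ _, h2⟩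
    have hTmem : ∀ M : X, π M = (S, T) → ∀ v : Fin b, (Sum.inr v ∈ M.1.verts ↔ v ∈ Tᶜ) := by
      intro M hMp v
      have h1 : (Finset.univ.filter fun v : Fin b => Sum.inr v ∉ M.1.verts) = T :=
        congrArg Prod.snd hMp
      rw [Finset.mem_compl, ← h1, Finset.mem_filter]
      constructor
      · intro h h2; exact h2.2 h
      · intro h; by_contra h2; exact h ⟨Finset.mem_univ _, h2⟩
    -- unique partners
    have hexu1 : ∀ M : X, π M = (S, T) → ∀ i, ∃! j,
        M.1.Adj (Sum.inl (eS i : Fin b)) (Sum.inr (eT j : Fin b)) := by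
      intro M hMp i
      obtain ⟨w, hw, hw'⟩ := M.2.1 ((hSmem M hMp _).mpr (eS i).2)
      obtain (v|v) := w
      · exact (hbip₁ _ _ (M.1.adj_sub hw)).elim
      · have hvT : v ∈ Tᶜ := (hTmem M hMp v).mp (M.1.edge_vert (M.1.adj_symm hw))
        have hcv : ((eT (eT.symm ⟨v, hvT⟩)) : Fin b) = v := by rw [OrderIso.apply_symm_apply]
        refine ⟨eT.symm ⟨v, hvT⟩, by simpa only [hcv] using hw, ?_⟩
        intro j hj
        refine eT.injective (Subtype.ext ?_)
        rw [hcv]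
        exact Sum.inr.inj (hw' _ hj)
    have hexu2 : ∀ M : X, π M = (S, T) → ∀ j, ∃! i,
        M.1.Adj (Sum.inl (eS i : Fin b)) (Sum.inr (eT j : Fin b)) := by
      intro M hMp j
      obtain ⟨w, hw, hw'⟩ := M.2.1 ((hTmem M hMp _).mpr (eT j).2)
      obtain (u|u) := w
      · have huS : u ∈ Sᶜ := (hSmem M hMp u).mp (M.1.edge_vert (M.1.adj_symm hw))
        have hcu : ((eS (eS.symm ⟨u, huS⟩)) : Fin b) = u := by rw [OrderIso.apply_symm_apply]
        refine ⟨eS.symm ⟨u, huS⟩, by simpa only [hcu] using M.1.adj_symm hw, ?_⟩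
        intro i hi
        refine eS.injective (Subtype.ext ?_)
        rw [hcu]
        exact Sum.inl.inj (hw' _ (M.1.adj_symm hi))
      · exact (hbip₂ _ _ (M.1.adj_sub hw)).elim
    -- transfer lemma: adjacency determined by the relabeled perfect matching
    have main : ∀ K L : {M : X // π M = (S, T)},
        (∀ i j, (K.1.1.Adj (Sum.inl (eS i : Fin b)) (Sum.inr (eT j : Fin b)) ↔
                 L.1.1.Adj (Sum.inl (eS i : Fin b)) (Sum.inr (eT j : Fin b)))) →
        ∀ u v, K.1.1.Adj (Sum.inl u) (Sum.inr v) → L.1.1.Adj (Sum.inl u) (Sum.inr v) := by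
      intro K L hKL u v h
      have hu : u ∈ Sᶜ := (hSmem K.1 K.2 u).mp (K.1.1.edge_vert h)
      have hv : v ∈ Tᶜ := (hTmem K.1 K.2 v).mp (K.1.1.edge_vert (K.1.1.adj_symm h))
      have hcu : ((eS (eS.symm ⟨u, hu⟩)) : Fin b) = u := by rw [OrderIso.apply_symm_apply]
      have hcv : ((eT (eT.symm ⟨v, hv⟩)) : Fin b) = v := by rw [OrderIso.apply_symm_apply]
      have h2 := (hKL (eS.symm ⟨u, hu⟩) (eT.symm ⟨v, hv⟩)).mp (by rw [hcu, hcv]; exact h)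
      rw [hcu, hcv] at h2
      exact h2
    -- the injection
    have hfc : (((Finset.univ : Finset X).filter fun M => π M = (S, T)).card)
        = Nat.card {M : X // π M = (S, T)} := by
      rw [Nat.card_eq_fintype_card, Fintype.card_subtype]
    have hinj : Nat.card {M : X // π M = (S, T)} ≤
        Nat.card {N : (bipLift R).Subgraph // N.IsPerfectMatching} := by
      apply Nat.card_le_card_of_injective
        (f := fun MM : {M : X // π M = (S, T)} =>
          (⟨bipSub R (fun i j => MM.1.1.Adj (Sum.inl (eS i : Fin b)) (Sum.inr (eT j : Fin b)))
              (fun i j h => MM.1.1.adj_sub h),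
            bipSub_isPerfectMatching (hexu1 MM.1 MM.2) (hexu2 MM.1 MM.2)⟩ :
            {N : (bipLift R).Subgraph // N.IsPerfectMatching}))
      intro M N hMN
      have hAdj : ∀ i j, (M.1.1.Adj (Sum.inl (eS i : Fin b)) (Sum.inr (eT j : Fin b)) ↔
          N.1.1.Adj (Sum.inl (eS i : Fin b)) (Sum.inr (eT j : Fin b))) := by
        intro i j
        have h2 := congrArg (fun K : {N : (bipLift R).Subgraph // N.IsPerfectMatching} =>
          K.1.Adj (Sum.inl i) (Sum.inr j)) hMN
        exact h2.to_iff
      apply Subtype.ext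
      apply Subtype.ext
      ext x y
      · obtain (u|u) := x
        · exact (hSmem M.1 M.2 u).trans (hSmem N.1 N.2 u).symm
        · exact (hTmem M.1 M.2 u).trans (hTmem N.1 N.2 u).symm
      · obtain (u|u) := x <;> obtain (v|v) := y
        · exact ⟨fun h => (hbip₁ _ _ (M.1.1.adj_sub h)).elim,
            fun h => (hbip₁ _ _ (N.1.1.adj_sub h)).elim⟩
        · exact ⟨main M N (fun i j => hAdj i j) u v, main N M (fun i j => (hAdj i j).symm) u v⟩
        · constructor
          · intro h
            exact N.1.1.adj_symm (main M N (fun i j => hAdj i j) v u (M.1.1.adj_symm h))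
          · intro h
            exact M.1.1.adj_symm (main N M (fun i j => (hAdj i j).symm) v u (N.1.1.adj_symm h))
        · exact ⟨fun h => (hbip₂ _ _ (M.1.1.adj_sub h)).elim,
            fun h => (hbip₂ _ _ (N.1.1.adj_sub h)).elim⟩
    calc ((((Finset.univ : Finset X).filter fun M => π M = (S, T)).card : ℕ) : ℝ)
        ≤ (Nat.card {N : (bipLift R).Subgraph // N.IsPerfectMatching} : ℝ) := by
          rw [hfc]; exact_mod_cast hinj
      _ ≤ (a.factorial : ℝ) ^ ((n : ℝ) / a) := BM_general a ha hBM n R hd1 hd2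
  -- assemble
  have hPcard : P.card = (b.choose t) * (b.choose t) := by
    rw [hP, Finset.card_product, Finset.card_powersetCard, Finset.card_fin]
  calc (Nat.card X : ℝ)
      = ((Finset.univ : Finset X).card : ℝ) := by
        rw [Nat.card_eq_fintype_card, Finset.card_univ]
    _ = ∑ p ∈ P, ((((Finset.univ : Finset X).filter fun M => π M = p).card : ℕ) : ℝ) := by
        rw [hcount]; push_cast; rfl
    _ ≤ ∑ _p ∈ P, (a.factorial : ℝ) ^ ((n : ℝ) / a) := Finset.sum_le_sum hfiber
    _ = (P.card : ℝ) * (a.factorial : ℝ) ^ ((n : ℝ) / a) := by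
        rw [Finset.sum_const, nsmul_eq_mul]
    _ = (b.choose t : ℝ) ^ 2 * (a.factorial : ℝ) ^ ((n : ℝ) / a) := by
        rw [hPcard]; push_cast; ring
end

section
/- Let M be a perfect matching of size b in an a-regular bipartite graph G with b vertices in each class, and let F be a uniformly random t-subset of the edges of M. Then the expected number of edges of G in the subgraph induced by the vertex set covered by F equals t + (ab − b)·C(t,2)/C(b,2), which is less than t + b when t ≤ b/√a. -/
open Finset

lemma count_supersets {α : Type*} [DecidableEq α] (S A : Finset α) (t : ℕ) (hA : A ⊆ S) :
    ((S.powersetCard t).filter (fun F => A ⊆ F)).card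
      = if A.card ≤ t then (S.card - A.card).choose (t - A.card) else 0 := by
  split_ifs with h
  · rw [← Finset.card_sdiff_of_subset hA, ← Finset.card_powersetCard]
    refine Finset.card_nbij' (fun F => F \ A) (fun F => F ∪ A) ?_ ?_ ?_ ?_
    · intro F hF
      simp only [mem_coe, mem_filter, mem_powersetCard] at hF ⊢
      obtain ⟨⟨hFS, hFt⟩, hAF⟩ := hF
      exact ⟨Finset.sdiff_subset_sdiff hFS (le_refl _), by rw [Finset.card_sdiff_of_subset hAF, hFt]⟩
    · intro F hF
      simp only [mem_coe, mem_filter, mem_powersetCard] at hF ⊢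
      obtain ⟨hFS, hFt⟩ := hF
      have hdisj : Disjoint F A := Finset.disjoint_left.mpr fun x hx =>
        (Finset.mem_sdiff.mp (hFS hx)).2
      refine ⟨⟨Finset.union_subset (hFS.trans Finset.sdiff_subset) hA, ?_⟩, Finset.subset_union_right⟩
      rw [Finset.card_union_of_disjoint hdisj, hFt]
      omega
    · intro F hF
      simp only [mem_coe, mem_filter, mem_powersetCard] at hF
      exact Finset.sdiff_union_of_subset hF.2
    · intro F hF
      simp only [mem_coe, mem_filter, mem_powersetCard] at hF
      have hdisj : Disjoint F A := Finset.disjoint_left.mpr fun x hx =>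
        (Finset.mem_sdiff.mp (hF.1 hx)).2
      exact Finset.union_sdiff_cancel_right hdisj
  · rw [Finset.filter_eq_empty_iff.mpr, Finset.card_empty]
    intro F hF hAF
    exact h ((Finset.card_le_card hAF).trans_eq (Finset.mem_powersetCard.mp hF).2)

set_option maxHeartbeats 2000000 in
theorem expected_induced_edges (a b t : ℕ) (ha : 1 ≤ a) (hb : 2 ≤ b) (ht : t ≤ b)
    (G : SimpleGraph (Fin b ⊕ Fin b))
    (hbip₁ : ∀ u v, ¬ G.Adj (Sum.inl u) (Sum.inl v))
    (hbip₂ : ∀ u v, ¬ G.Adj (Sum.inr u) (Sum.inr v))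
    (hreg : ∀ v, (G.neighborSet v).ncard = a)
    (M : G.Subgraph) (hM : M.IsPerfectMatching) :
    ((∑ F ∈ (M.edgeSet.toFinite.toFinset.powersetCard t),
        ((G.edgeSet ∩ {e | ∀ v ∈ e, ∃ f ∈ F, v ∈ f}).ncard : ℝ)) / (b.choose t) =
      (t : ℝ) + ((a * b - b : ℕ) : ℝ) * (t.choose 2 : ℝ) / (b.choose 2 : ℝ)) ∧
    ((t : ℝ) ≤ (b : ℝ) / Real.sqrt a →
      (∑ F ∈ (M.edgeSet.toFinite.toFinset.powersetCard t),
        ((G.edgeSet ∩ {e | ∀ v ∈ e, ∃ f ∈ F, v ∈ f}).ncard : ℝ)) / (b.choose t) <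
        (t : ℝ) + b) := by
  classical
  -- matched partner function
  have hex : ∀ v, ∃! w, M.Adj v w := fun v => hM.1 (hM.2 v)
  choose w hw hw' using hex
  set S : Finset (Sym2 (Fin b ⊕ Fin b)) := M.edgeSet.toFinite.toFinset with hSdef
  have hSmem : ∀ e, e ∈ S ↔ e ∈ M.edgeSet := fun e => Set.Finite.mem_toFinset _
  have hmE : ∀ v, s(v, w v) ∈ M.edgeSet := fun v => hw v
  have huniq : ∀ v f, f ∈ M.edgeSet → v ∈ f → f = s(v, w v) := by
    intro v f hf hvf
    induction f with
    | _ x y =>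
      have hadj : M.Adj x y := hf
      rcases Sym2.mem_iff.mp hvf with rfl | rfl
      · rw [hw' v y hadj]
      · rw [Sym2.eq_swap]
        rw [hw' v x (M.adj_symm hadj)]
  have hMbip : ∀ u z, ¬ M.Adj (Sum.inl u) (Sum.inl z) := fun u z h => hbip₁ u z (M.adj_sub h)
  have hMbip' : ∀ u z, ¬ M.Adj (Sum.inr u) (Sum.inr z) := fun u z h => hbip₂ u z (M.adj_sub h)
  -- S has b edges
  have hScard : S.card = b := by
    have : (univ : Finset (Fin b)).card = S.card := by
      refine Finset.card_nbij (fun u => s(Sum.inl u, w (Sum.inl u))) ?_ ?_ ?_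
      · intro u _
        exact (hSmem _).mpr (hmE _)
      · intro u _ u' _ h
        have h' : s(Sum.inl u, w (Sum.inl u)) = s(Sum.inl u', w (Sum.inl u')) := h
        have hm : (Sum.inl u : Fin b ⊕ Fin b) ∈ s(Sum.inl u', w (Sum.inl u')) := by
          rw [← h']; exact Sym2.mem_mk_left _ _
        rcases Sym2.mem_iff.mp hm with h1 | h2
        · simpa using h1
        · exfalso
          have := hw (Sum.inl u')
          rw [← h2] at this
          exact hMbip u' u this
      · intro e he
        have heM : e ∈ M.edgeSet := (hSmem e).mp (by simpa using he)
        induction e with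
        | _ x y =>
          have hadj : M.Adj x y := heM
          match x, y with
          | Sum.inl u, yy =>
            refine ⟨u, by simp, ?_⟩
            rw [hw' (Sum.inl u) yy hadj]
          | Sum.inr v, Sum.inl u =>
            refine ⟨u, by simp, ?_⟩
            rw [Sym2.eq_swap]
            rw [hw' (Sum.inl u) (Sum.inr v) (M.adj_symm hadj)]
          | Sum.inr v, Sum.inr v' => exact absurd hadj (hMbip' v v')
    simpa using this.symm
  -- G has a*b edges
  set E : Finset (Sym2 (Fin b ⊕ Fin b)) := univ.filter (fun e => e ∈ G.edgeSet) with hEdef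
  have hEmem : ∀ e, e ∈ E ↔ e ∈ G.edgeSet := by intro e; simp [hEdef]
  have hEeq : E = G.edgeFinset := by
    ext e; simp [hEdef, SimpleGraph.mem_edgeFinset]
  have hEcard : E.card = a * b := by
    have hdeg : ∀ v, G.degree v = a := by
      intro v
      rw [← hreg v, SimpleGraph.degree, SimpleGraph.neighborFinset,
        Set.ncard_eq_toFinset_card']
    have hhs := SimpleGraph.sum_degrees_eq_twice_card_edges G
    simp only [hdeg, Finset.sum_const, Finset.card_univ, smul_eq_mul] at hhs
    rw [hEeq]
    have hcu : Fintype.card (Fin b ⊕ Fin b) = 2 * b := by simp [two_mul]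
    rw [hcu] at hhs
    have h2' : 2 * (a * b) = 2 * #G.edgeFinset := by rw [← hhs]; ring
    omega
  have hSE : S ⊆ E := by
    intro e he
    exact (hEmem e).mpr (M.edgeSet_subset ((hSmem e).mp he))
  -- per-edge counts
  set c₁ : ℕ := if 1 ≤ t then (b - 1).choose (t - 1) else 0 with hc₁def
  set c₂ : ℕ := if 2 ≤ t then (b - 2).choose (t - 2) else 0 with hc₂def
  have hcount : ∀ e ∈ E, ((S.powersetCard t).filter
      (fun F => ∀ v ∈ e, ∃ f ∈ F, v ∈ f)).card = if e ∈ S then c₁ else c₂ := by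
    intro e he
    have heG : e ∈ G.edgeSet := (hEmem e).mp he
    induction e with
    | _ x y =>
      have hadj : G.Adj x y := heG
      have hxy : x ≠ y := hadj.ne
      have hfilter_eq : (S.powersetCard t).filter (fun F => ∀ v ∈ s(x,y), ∃ f ∈ F, v ∈ f)
          = (S.powersetCard t).filter (fun F => ({s(x, w x), s(y, w y)} : Finset _) ⊆ F) := by
        apply Finset.filter_congr
        intro F hF
        have hFS : F ⊆ S := (Finset.mem_powersetCard.mp hF).1
        try rw [eq_iff_iff]
        constructor
        · intro hcov
          rw [Finset.insert_subset_iff, Finset.singleton_subset_iff]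
          constructor
          · obtain ⟨f, hfF, hvf⟩ := hcov x (Sym2.mem_mk_left x y)
            rw [← huniq x f ((hSmem f).mp (hFS hfF)) hvf]
            exact hfF
          · obtain ⟨f, hfF, hvf⟩ := hcov y (Sym2.mem_mk_right x y)
            rw [← huniq y f ((hSmem f).mp (hFS hfF)) hvf]
            exact hfF
        · intro hsub v hv
          rcases Sym2.mem_iff.mp hv with rfl | rfl
          · exact ⟨s(v, w v), hsub (Finset.mem_insert_self _ _), Sym2.mem_mk_left _ _⟩
          · exact ⟨s(v, w v), hsub (Finset.mem_insert_of_mem (Finset.mem_singleton_self _)),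
              Sym2.mem_mk_left _ _⟩
      rw [hfilter_eq]
      by_cases heS : s(x, y) ∈ S
      · have hmx : s(x, w x) = s(x, y) := (huniq x _ ((hSmem _).mp heS) (Sym2.mem_mk_left x y)).symm
        have hmy : s(y, w y) = s(x, y) := (huniq y _ ((hSmem _).mp heS) (Sym2.mem_mk_right x y)).symm
        rw [hmx, hmy]
        have hpair : ({s(x,y), s(x,y)} : Finset (Sym2 (Fin b ⊕ Fin b))) = {s(x,y)} := by
          simp
        rw [hpair, count_supersets S {s(x,y)} t (Finset.singleton_subset_iff.mpr heS),
          Finset.card_singleton, hScard]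
        rw [if_pos heS, hc₁def]
      · have hne : s(x, w x) ≠ s(y, w y) := by
          intro hcontra
          have hy : y ∈ s(x, w x) := by rw [hcontra]; exact Sym2.mem_mk_left _ _
          rcases Sym2.mem_iff.mp hy with h1 | h2
          · exact hxy h1.symm
          · apply heS
            rw [hSmem, h2]
            exact hmE x
        have hsub : ({s(x, w x), s(y, w y)} : Finset _) ⊆ S := by
          rw [Finset.insert_subset_iff, Finset.singleton_subset_iff]
          exact ⟨(hSmem _).mpr (hmE x), (hSmem _).mpr (hmE y)⟩
        rw [count_supersets _ _ t hsub,
          Finset.card_insert_of_notMem (by simpa using hne), Finset.card_singleton, hScard]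
        rw [if_neg heS, hc₂def]
  -- the sum, in ℕ
  have hsum_nat : (∑ F ∈ S.powersetCard t,
      (G.edgeSet ∩ {e | ∀ v ∈ e, ∃ f ∈ F, v ∈ f}).ncard) = b * c₁ + (a * b - b) * c₂ := by
    have hstep : ∀ F : Finset (Sym2 (Fin b ⊕ Fin b)), (G.edgeSet ∩ {e | ∀ v ∈ e, ∃ f ∈ F, v ∈ f}).ncard
        = (E.filter (fun e => ∀ v ∈ e, ∃ f ∈ F, v ∈ f)).card := by
      intro F
      rw [Set.ncard_eq_toFinset_card']
      congr 1
      ext e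
      simp [hEdef, Finset.mem_filter, Set.mem_toFinset]
    calc (∑ F ∈ S.powersetCard t, (G.edgeSet ∩ {e | ∀ v ∈ e, ∃ f ∈ F, v ∈ f}).ncard)
        = ∑ F ∈ S.powersetCard t, ∑ e ∈ E, (if ∀ v ∈ e, ∃ f ∈ F, v ∈ f then 1 else 0) := by
          refine Finset.sum_congr rfl fun F _ => ?_
          rw [hstep F, Finset.card_filter]
      _ = ∑ e ∈ E, ∑ F ∈ S.powersetCard t, (if ∀ v ∈ e, ∃ f ∈ F, v ∈ f then 1 else 0) :=
          Finset.sum_comm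
      _ = ∑ e ∈ E, ((S.powersetCard t).filter (fun F => ∀ v ∈ e, ∃ f ∈ F, v ∈ f)).card := by
          refine Finset.sum_congr rfl fun e _ => ?_
          rw [Finset.card_filter]
      _ = ∑ e ∈ E, (if e ∈ S then c₁ else c₂) := Finset.sum_congr rfl hcount
      _ = b * c₁ + (a * b - b) * c₂ := by
          rw [Finset.sum_ite, Finset.sum_const, Finset.sum_const, smul_eq_mul, smul_eq_mul,
            Finset.filter_mem_eq_inter, Finset.inter_eq_right.mpr hSE, Finset.filter_not,
            Finset.filter_mem_eq_inter, Finset.inter_eq_right.mpr hSE,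
            Finset.card_sdiff_of_subset hSE, hScard, hEcard]
  -- key choose identities
  have hbt : (0 : ℝ) < (b.choose t : ℝ) := by exact_mod_cast Nat.choose_pos ht
  have hb2 : (0 : ℝ) < (b.choose 2 : ℝ) := by exact_mod_cast Nat.choose_pos hb
  have h1 : (t : ℝ) * (b.choose t : ℝ) = (b : ℝ) * (c₁ : ℝ) := by
    rcases Nat.eq_zero_or_pos t with rfl | htpos
    · simp [hc₁def]
    · have h1n : b * (b - 1).choose (t - 1) = b.choose t * t := by
        have := Nat.add_one_mul_choose_eq (b - 1) (t - 1)
        have hb1 : (b - 1) + 1 = b := by omega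
        have ht1 : (t - 1) + 1 = t := by omega
        rw [hb1, ht1] at this
        exact this
      have hc : c₁ = (b - 1).choose (t - 1) := by rw [hc₁def, if_pos (show 1 ≤ t from htpos)]
      rw [hc]
      have h1n' : t * b.choose t = b * (b - 1).choose (t - 1) := by
        rw [mul_comm]; exact h1n.symm
      exact_mod_cast h1n'
  have h2 : (b.choose t : ℝ) * (t.choose 2 : ℝ) = (b.choose 2 : ℝ) * (c₂ : ℝ) := by
    rcases lt_or_ge t 2 with h | h
    · have : t.choose 2 = 0 := Nat.choose_eq_zero_of_lt h
      have hc : c₂ = 0 := by rw [hc₂def, if_neg (by omega)]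
      rw [this, hc]
      simp
    · have hc : c₂ = (b - 2).choose (t - 2) := by rw [hc₂def, if_pos h]
      rw [hc]
      exact_mod_cast Nat.choose_mul (n := b) h
  -- real-valued sum
  have hsum_real : (∑ F ∈ S.powersetCard t,
      ((G.edgeSet ∩ {e | ∀ v ∈ e, ∃ f ∈ F, v ∈ f}).ncard : ℝ))
      = (b : ℝ) * c₁ + ((a * b - b : ℕ) : ℝ) * c₂ := by
    rw [← Nat.cast_sum]
    rw [hsum_nat]
    push_cast
    ring
  have hmain : (∑ F ∈ S.powersetCard t,
      ((G.edgeSet ∩ {e | ∀ v ∈ e, ∃ f ∈ F, v ∈ f}).ncard : ℝ)) / (b.choose t)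
      = (t : ℝ) + ((a * b - b : ℕ) : ℝ) * (t.choose 2 : ℝ) / (b.choose 2 : ℝ) := by
    rw [hsum_real]
    field_simp
    linear_combination (-(b.choose 2 : ℝ)) * h1 - ((a * b - b : ℕ) : ℝ) * h2
  refine ⟨hmain, ?_⟩
  intro hst
  rw [hmain]
  have hsa : (0:ℝ) < Real.sqrt a := Real.sqrt_pos.mpr (by exact_mod_cast ha)
  have hs1 : (1:ℝ) ≤ Real.sqrt a := by
    rw [show (1:ℝ) = Real.sqrt 1 by simp]
    exact Real.sqrt_le_sqrt (by exact_mod_cast ha)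
  have hs2 : Real.sqrt a ^ 2 = a := Real.sq_sqrt (by positivity)
  have htb : (t : ℝ) * Real.sqrt a ≤ b := (le_div_iff₀ hsa).mp hst
  have habb : ((a * b - b : ℕ) : ℝ) = (a : ℝ) * b - b := by
    have : b ≤ a * b := Nat.le_mul_of_pos_left b ha
    push_cast [Nat.cast_sub this]
    ring
  have hkey : ((a : ℝ) - 1) * t * (t - 1) < (b : ℝ) * (b - 1) := by
    set s := Real.sqrt a with hs
    rcases le_or_gt t 1 with h | h
    · have h0 : (t : ℝ) * ((t : ℝ) - 1) = 0 := by interval_cases t <;> norm_num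
      have hz : ((a : ℝ) - 1) * t * ((t : ℝ) - 1) = 0 := by rw [mul_assoc, h0, mul_zero]
      have hb2' : (2 : ℝ) ≤ b := by exact_mod_cast hb
      nlinarith [hz]
    · have ht2 : (2 : ℝ) ≤ t := by exact_mod_cast h
      have hb2' : (2 : ℝ) ≤ b := by exact_mod_cast hb
      nlinarith [mul_nonneg (sub_nonneg.mpr htb) (by nlinarith : (0:ℝ) ≤ (b:ℝ) + s * t - 1),
        mul_nonneg (by positivity : (0:ℝ) ≤ (t:ℝ)) (by nlinarith : (0:ℝ) ≤ s^2 - s),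
        mul_nonneg (by linarith : (0:ℝ) ≤ (t:ℝ) - 1) (by linarith : (0:ℝ) ≤ (t:ℝ) - 2)]
  have hgoal : ((a * b - b : ℕ) : ℝ) * (t.choose 2 : ℝ) / (b.choose 2 : ℝ) < b := by
    rw [div_lt_iff₀ hb2, habb, Nat.cast_choose_two, Nat.cast_choose_two]
    have hbpos : (0 : ℝ) < (b : ℝ) / 2 := by
      have : (2 : ℝ) ≤ b := by exact_mod_cast hb
      linarith
    have hmul := mul_lt_mul_of_pos_left hkey hbpos
    nlinarith [hmul]
  linarith
end

section
/- For 0 < x < 1/2 and n → ∞, ∑_{k ≤ xn} C(n,k) = 2^{(h(x)+o(1))·n}, where h(x) = −x·log₂x − (1−x)·log₂(1−x) is the binary entropy function. In particular, for every fixed 0 < x < 1/2 and every ε > 0, for all sufficiently large n: 2^{(h(x)−ε)n} ≤ ∑_{k ≤ ⌊xn⌋} C(n,k) ≤ 2^{h(x)n}. -/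
/-- The binary entropy function. -/
noncomputable def binEntropy (x : ℝ) : ℝ := -x * Real.logb 2 x - (1 - x) * Real.logb 2 (1 - x)

open Finset

private lemma step_up (n m k : ℕ) (hmk : m ≤ k) :
    n.choose (k+1) * m^(k+1) * (n-m)^(n-(k+1)) ≤ n.choose k * m^k * (n-m)^(n-k) := by
  rcases le_or_gt n k with h | h
  · have h0 : n.choose (k+1) = 0 := Nat.choose_eq_zero_of_lt (by omega)
    simp [h0]
  · have hnk : n - k = (n - (k+1)) + 1 := by omega
    have h1 : n.choose (k+1) * (k+1) = n.choose k * (n-k) := Nat.choose_succ_right_eq n k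
    have h2 : (n-k) * m ≤ (n-m) * (k+1) := Nat.mul_le_mul (by omega) (by omega)
    have key : n.choose (k+1) * m ≤ n.choose k * (n-m) := by
      have hc : n.choose (k+1) * m * (k+1) ≤ n.choose k * (n-m) * (k+1) := by
        calc n.choose (k+1) * m * (k+1) = n.choose (k+1) * (k+1) * m := by ring
          _ = n.choose k * (n-k) * m := by rw [h1]
          _ = n.choose k * ((n-k) * m) := by ring
          _ ≤ n.choose k * ((n-m) * (k+1)) := Nat.mul_le_mul_left _ h2
          _ = n.choose k * (n-m) * (k+1) := by ring
      exact Nat.le_of_mul_le_mul_right hc (Nat.succ_pos k)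
    calc n.choose (k+1) * m^(k+1) * (n-m)^(n-(k+1))
        = (n.choose (k+1) * m) * (m^k * (n-m)^(n-(k+1))) := by rw [pow_succ]; ring
      _ ≤ (n.choose k * (n-m)) * (m^k * (n-m)^(n-(k+1))) :=
          Nat.mul_le_mul_right _ key
      _ = n.choose k * m^k * (n-m)^(n-k) := by rw [hnk, pow_succ]; ring

private lemma step_down (n m k : ℕ) (hk : k < m) (hmn : m ≤ n) :
    n.choose k * m^k * (n-m)^(n-k) ≤ n.choose (k+1) * m^(k+1) * (n-m)^(n-(k+1)) := by
  have hnk : n - k = (n - (k+1)) + 1 := by omega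
  have h1 : n.choose (k+1) * (k+1) = n.choose k * (n-k) := Nat.choose_succ_right_eq n k
  have h2 : (n-m) * (k+1) ≤ (n-k) * m := Nat.mul_le_mul (by omega) (by omega)
  have key : n.choose k * (n-m) ≤ n.choose (k+1) * m := by
    have hc : n.choose k * (n-m) * (k+1) ≤ n.choose (k+1) * m * (k+1) := by
      calc n.choose k * (n-m) * (k+1) = n.choose k * ((n-m) * (k+1)) := by ring
        _ ≤ n.choose k * ((n-k) * m) := Nat.mul_le_mul_left _ h2
        _ = n.choose k * (n-k) * m := by ring
        _ = n.choose (k+1) * (k+1) * m := by rw [h1]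
        _ = n.choose (k+1) * m * (k+1) := by ring
    exact Nat.le_of_mul_le_mul_right hc (Nat.succ_pos k)
  calc n.choose k * m^k * (n-m)^(n-k)
      = (n.choose k * (n-m)) * (m^k * (n-m)^(n-(k+1))) := by rw [hnk, pow_succ]; ring
    _ ≤ (n.choose (k+1) * m) * (m^k * (n-m)^(n-(k+1))) := Nat.mul_le_mul_right _ key
    _ = n.choose (k+1) * m^(k+1) * (n-m)^(n-(k+1)) := by rw [pow_succ]; ring

private lemma mode_max (n m : ℕ) (hmn : m ≤ n) (k : ℕ) :
    n.choose k * m^k * (n-m)^(n-k) ≤ n.choose m * m^m * (n-m)^(n-m) := by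
  rcases le_or_gt m k with h | h
  · obtain ⟨j, rfl⟩ := Nat.exists_eq_add_of_le h
    induction j with
    | zero => simp
    | succ j ih =>
      have := step_up n m (m+j) (Nat.le_add_right m j)
      calc n.choose (m+(j+1)) * m^(m+(j+1)) * (n-m)^(n-(m+(j+1)))
          = n.choose ((m+j)+1) * m^((m+j)+1) * (n-m)^(n-((m+j)+1)) := by ring_nf
        _ ≤ n.choose (m+j) * m^(m+j) * (n-m)^(n-(m+j)) := this
        _ ≤ n.choose m * m^m * (n-m)^(n-m) := ih (by omega)
  · -- k < m : show t k ≤ t m by climbing up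
    have climb : ∀ j : ℕ, j ≤ m - k →
        n.choose k * m^k * (n-m)^(n-k) ≤ n.choose (k+j) * m^(k+j) * (n-m)^(n-(k+j)) := by
      intro j
      induction j with
      | zero => simp
      | succ j ih =>
        intro hj
        calc n.choose k * m^k * (n-m)^(n-k)
            ≤ n.choose (k+j) * m^(k+j) * (n-m)^(n-(k+j)) := ih (by omega)
          _ ≤ n.choose ((k+j)+1) * m^((k+j)+1) * (n-m)^(n-((k+j)+1)) :=
              step_down n m (k+j) (by omega) hmn
          _ = n.choose (k+(j+1)) * m^(k+(j+1)) * (n-m)^(n-(k+(j+1))) := by ring_nf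
    have := climb (m - k) le_rfl
    rwa [Nat.add_sub_cancel' h.le] at this

private lemma nat_key (n m : ℕ) (hmn : m ≤ n) :
    n^n ≤ (n+1) * (n.choose m * m^m * (n-m)^(n-m)) := by
  have hsum : (n:ℕ)^n = ∑ k ∈ range (n+1), n.choose k * m^k * (n-m)^(n-k) := by
    have := add_pow m (n-m) n
    rw [Nat.add_sub_cancel' hmn] at this
    rw [this]
    exact Finset.sum_congr rfl fun k _ => by push_cast; ring
  rw [hsum]
  calc ∑ k ∈ range (n+1), n.choose k * m^k * (n-m)^(n-k)
      ≤ ∑ _k ∈ range (n+1), n.choose m * m^m * (n-m)^(n-m) :=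
        Finset.sum_le_sum fun k _ => mode_max n m hmn k
    _ = (n+1) * (n.choose m * m^m * (n-m)^(n-m)) := by
        rw [Finset.sum_const, card_range]; ring

private lemma pow_eq_exp (x : ℝ) (hx : 0 < x) (k : ℕ) : x ^ k = Real.exp (k * Real.log x) := by
  rw [Real.exp_nat_mul, Real.exp_log hx]

private lemma lower_key (n m : ℕ) (h0 : 0 < m) (hmn : m < n) :
    (2:ℝ) ^ (_root_.binEntropy ((m:ℝ)/(n:ℝ)) * n) ≤ ((n:ℝ)+1) * (n.choose m : ℝ) := by
  have hn0 : (0:ℝ) < n := Nat.cast_pos.2 (by omega)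
  have hm0 : (0:ℝ) < m := Nat.cast_pos.2 h0
  have hmn' : (m:ℝ) < n := Nat.cast_lt.2 hmn
  have hd0 : (0:ℝ) < (n:ℝ) - m := by linarith
  have hcast : ((n - m : ℕ) : ℝ) = (n:ℝ) - m := Nat.cast_sub hmn.le
  have hkey : ((n:ℝ))^(n:ℕ) ≤ ((n:ℝ)+1) * ((n.choose m : ℝ) * (m:ℝ)^(m:ℕ) * ((n:ℝ) - m)^(n - m : ℕ)) := by
    have h2 : ((n^n : ℕ) : ℝ) ≤ (((n+1) * (n.choose m * m^m * (n-m)^(n-m)) : ℕ) : ℝ) :=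
      Nat.cast_le.2 (nat_key n m hmn.le)
    push_cast [Nat.cast_sub hmn.le] at h2
    convert h2 using 2 <;> push_cast <;> ring
  have hle : Real.exp ((n:ℝ) * Real.log n - (m:ℝ)*Real.log m - ((n:ℝ)-m)*Real.log ((n:ℝ)-m))
      ≤ ((n:ℝ)+1) * (n.choose m : ℝ) := by
    rw [pow_eq_exp _ hn0, pow_eq_exp _ hm0, pow_eq_exp _ hd0, hcast] at hkey
    rw [Real.exp_sub, Real.exp_sub, div_div, div_le_iff₀ (by positivity)]
    calc Real.exp ((n:ℝ) * Real.log n)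
        ≤ ((n:ℝ)+1) * ((n.choose m : ℝ) * Real.exp ((m:ℝ)*Real.log m) * Real.exp (((n:ℝ)-m)*Real.log ((n:ℝ)-m))) := hkey
      _ = ((n:ℝ)+1) * (n.choose m : ℝ) * (Real.exp ((m:ℝ)*Real.log m) * Real.exp (((n:ℝ)-m)*Real.log ((n:ℝ)-m))) := by ring
  refine le_trans (le_of_eq ?_) hle
  rw [Real.rpow_def_of_pos two_pos]
  congr 1
  show Real.log 2 * ((-((m:ℝ)/n) * Real.logb 2 ((m:ℝ)/n) - (1 - (m:ℝ)/n) * Real.logb 2 (1 - (m:ℝ)/n)) * n) = _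
  have h1 : 1 - (m:ℝ)/n = ((n:ℝ) - m)/n := by field_simp
  rw [h1, Real.logb, Real.logb, Real.log_div (ne_of_gt hm0) (ne_of_gt hn0),
    Real.log_div (ne_of_gt hd0) (ne_of_gt hn0)]
  have hl2 : Real.log 2 ≠ 0 := ne_of_gt (Real.log_pos one_lt_two)
  field_simp
  ring

private lemma upper_key (x : ℝ) (hx0 : 0 < x) (hx : x < 1/2) (n : ℕ) :
    (∑ k ∈ Finset.range (⌊x * n⌋₊ + 1), (n.choose k : ℝ)) ≤ (2:ℝ) ^ (_root_.binEntropy x * n) := by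
  set m := ⌊x * n⌋₊ with hmdef
  have hx1 : x < 1 := by linarith
  have h1x : 0 < 1 - x := by linarith
  have hmx : (m:ℝ) ≤ x * n := Nat.floor_le (by positivity)
  have hmn : m ≤ n := by
    have h : x * n ≤ (n:ℝ) := by nlinarith [Nat.cast_nonneg (α := ℝ) n]
    have := Nat.floor_le_floor h
    simpa using this
  clear_value m
  have hterm : ∀ k ∈ Finset.range (m+1),
      (n.choose k : ℝ) * (x^m * (1-x)^(n-m)) ≤ (n.choose k : ℝ) * (x^k * (1-x)^(n-k)) := by
    intro k hk
    have hkm : k ≤ m := Nat.lt_succ_iff.1 (Finset.mem_range.1 hk)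
    apply mul_le_mul_of_nonneg_left _ (Nat.cast_nonneg _)
    obtain ⟨d, rfl⟩ : ∃ d, m = k + d := ⟨m - k, by omega⟩
    have hnk : n - k = (n - (k+d)) + d := by omega
    rw [pow_add, hnk, pow_add]
    have hxd : x^d ≤ (1-x)^d := pow_le_pow_left₀ hx0.le (by linarith) d
    calc x^k * x^d * (1-x)^(n-(k+d)) = (x^k * (1-x)^(n-(k+d))) * x^d := by ring
      _ ≤ (x^k * (1-x)^(n-(k+d))) * (1-x)^d :=
          mul_le_mul_of_nonneg_left hxd (by positivity)
      _ = x^k * ((1-x)^(n-(k+d)) * (1-x)^d) := by ring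
  have hsum1 : (∑ k ∈ Finset.range (m+1), (n.choose k : ℝ)) * (x^m * (1-x)^(n-m)) ≤ 1 := by
    rw [Finset.sum_mul]
    calc ∑ k ∈ Finset.range (m+1), (n.choose k : ℝ) * (x^m*(1-x)^(n-m))
        ≤ ∑ k ∈ Finset.range (m+1), (n.choose k : ℝ) * (x^k*(1-x)^(n-k)) :=
          Finset.sum_le_sum hterm
      _ ≤ ∑ k ∈ Finset.range (n+1), (n.choose k : ℝ) * (x^k*(1-x)^(n-k)) :=
          Finset.sum_le_sum_of_subset_of_nonneg
            (Finset.range_subset_range.2 (by omega)) (fun k _ _ => by positivity)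
      _ = (x + (1-x))^n := by
          rw [add_pow]
          exact Finset.sum_congr rfl fun k _ => by ring
      _ = 1 := by norm_num
  have hpos : 0 < x^m * (1-x)^(n-m) := by positivity
  have hS : (∑ k ∈ Finset.range (m+1), (n.choose k:ℝ)) ≤ (x^m * (1-x)^(n-m))⁻¹ := by
    rw [inv_eq_one_div, le_div_iff₀ hpos]
    exact hsum1
  refine hS.trans ?_
  rw [pow_eq_exp x hx0, pow_eq_exp _ h1x, ← Real.exp_add, ← Real.exp_neg,
    Real.rpow_def_of_pos two_pos]
  apply Real.exp_le_exp.2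
  have hcast : ((n-m:ℕ):ℝ) = (n:ℝ) - m := Nat.cast_sub hmn
  rw [hcast]
  show _ ≤ Real.log 2 * ((-x * Real.logb 2 x - (1 - x) * Real.logb 2 (1 - x)) * n)
  rw [Real.logb, Real.logb]
  have hl2 : (0:ℝ) < Real.log 2 := Real.log_pos one_lt_two
  have hlogx : Real.log x < Real.log (1-x) := Real.log_lt_log hx0 (by linarith)
  have hexpand : Real.log 2 * ((-x * (Real.log x / Real.log 2) - (1-x) * (Real.log (1-x)/Real.log 2)) * n)
      = -(x*n)*Real.log x - ((1-x)*n)*Real.log (1-x) := by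
    field_simp
  rw [hexpand]
  nlinarith [mul_nonneg (sub_nonneg.2 hmx) (sub_nonneg.2 hlogx.le)]

private lemma exp_beats (c : ℝ) (hc : 0 < c) :
    ∃ N : ℕ, ∀ n : ℕ, N ≤ n → ((n:ℝ)+1) ≤ (2:ℝ) ^ (c * n) := by
  have hl2 : (0:ℝ) < Real.log 2 := Real.log_pos one_lt_two
  have hc2 : 0 < c * Real.log 2 / 2 := by positivity
  obtain ⟨M, hM⟩ := Filter.eventually_atTop.1 (Real.isLittleO_log_id_atTop.bound hc2)
  refine ⟨⌈M⌉₊ + 1, fun n hn => ?_⟩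
  have hn1 : 1 ≤ n := by omega
  have hnM : M ≤ (n:ℝ) + 1 := by
    have h1 : M ≤ (⌈M⌉₊ : ℝ) := Nat.le_ceil M
    have h2 : ((⌈M⌉₊ : ℕ) : ℝ) ≤ (n:ℝ) := Nat.cast_le.2 (by omega)
    linarith
  have hy1 : (1:ℝ) ≤ (n:ℝ) + 1 := by
    have : (1:ℝ) ≤ (n:ℝ) := Nat.one_le_cast.2 hn1
    linarith
  have hb := hM ((n:ℝ)+1) hnM
  simp only [id, Real.norm_eq_abs] at hb
  rw [abs_of_nonneg (Real.log_nonneg hy1), abs_of_nonneg (by linarith)] at hb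
  have hlog : Real.log ((n:ℝ)+1) ≤ c * Real.log 2 * n := by
    have hn' : (1:ℝ) ≤ (n:ℝ) := Nat.one_le_cast.2 hn1
    have : (n:ℝ) + 1 ≤ 2 * n := by linarith
    nlinarith
  calc (n:ℝ) + 1 = Real.exp (Real.log ((n:ℝ)+1)) := (Real.exp_log (by linarith)).symm
    _ ≤ Real.exp (c * Real.log 2 * n) := Real.exp_le_exp.2 hlog
    _ = (2:ℝ) ^ (c * n) := by rw [Real.rpow_def_of_pos two_pos]; ring_nf

theorem sum_choose_entropy (x : ℝ) (hx0 : 0 < x) (hx : x < 1 / 2) (ε : ℝ) (hε : 0 < ε) :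
    ∃ n₀ : ℕ, ∀ n : ℕ, n₀ ≤ n →
      (2 : ℝ) ^ ((binEntropy x - ε) * n) ≤
          (∑ k ∈ Finset.range (⌊x * n⌋₊ + 1), (n.choose k : ℝ))
        ∧
      (∑ k ∈ Finset.range (⌊x * n⌋₊ + 1), (n.choose k : ℝ)) ≤
        (2 : ℝ) ^ (binEntropy x * n) := by
  have hx1 : x < 1 := by linarith
  have h1x : 0 < 1 - x := by linarith
  -- continuity of binEntropy at x
  have hc : ContinuousAt binEntropy x := by
    show ContinuousAt (fun p : ℝ => -p * Real.logb 2 p - (1 - p) * Real.logb 2 (1 - p)) x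
    have h1 : ContinuousAt (fun p : ℝ => -p * Real.logb 2 p) x :=
      (continuousAt_id.neg.mul (Real.continuousAt_logb (ne_of_gt hx0)))
    have h2 : ContinuousAt (fun p : ℝ => (1-p) * Real.logb 2 (1-p)) x :=
      ((continuousAt_const.sub continuousAt_id).mul
        ((Real.continuousAt_logb (ne_of_gt h1x)).comp (continuousAt_const.sub continuousAt_id)))
    exact h1.sub h2
  obtain ⟨δ, hδ0, hδ⟩ := Metric.continuousAt_iff.1 hc (ε/2) (by linarith)
  obtain ⟨N, hN⟩ := exp_beats (ε/2) (by linarith)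
  refine ⟨N + ⌈1/x⌉₊ + ⌈1/δ⌉₊ + 1, fun n hn => ?_⟩
  constructor
  · -- lower bound
    set m := ⌊x * n⌋₊ with hmdef
    have hn1 : 1 ≤ n := by omega
    have hnr1 : (1:ℝ) ≤ n := Nat.one_le_cast.2 hn1
    have hnx : 1/x ≤ (n:ℝ) := by
      have h1 : (⌈1/x⌉₊ : ℝ) ≤ n := Nat.cast_le.2 (by omega)
      linarith [Nat.le_ceil (1/x)]
    have hxn1 : (1:ℝ) ≤ x * n := by
      rw [div_le_iff₀ hx0] at hnx
      linarith
    have hm1 : 1 ≤ m := Nat.le_floor (by exact_mod_cast hxn1)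
    have hmx : (m:ℝ) ≤ x * n := Nat.floor_le (by positivity)
    have hmx' : x * n < m + 1 := Nat.lt_floor_add_one _
    have hmn : m < n := by
      by_contra h
      push_neg at h
      have : (n:ℝ) ≤ m := Nat.cast_le.2 h
      nlinarith
    have hnpos : (0:ℝ) < n := by linarith
    -- dist (m/n) x < δ
    have hdist : dist ((m:ℝ)/n) x < δ := by
      have hδn : 1/δ < (n:ℝ) := by
        have h1 : (⌈1/δ⌉₊ : ℝ) + 1 ≤ n := by
          have := Nat.cast_le (α := ℝ).2 (show ⌈1/δ⌉₊ + 1 ≤ n by omega)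
          push_cast at this
          linarith
        linarith [Nat.le_ceil (1/δ)]
      have hδn' : 1/(n:ℝ) < δ := by
        rw [div_lt_iff₀ hnpos]
        have h2 := (div_lt_iff₀ hδ0).1 hδn
        nlinarith
      have hsplit : ((m:ℝ)+1)/n = (m:ℝ)/n + 1/n := by ring
      have h3 : x < ((m:ℝ)+1)/n := by rw [lt_div_iff₀ hnpos]; linarith
      rw [Real.dist_eq, abs_of_nonpos (by rw [sub_nonpos, div_le_iff₀ hnpos]; linarith)]
      rw [neg_sub]
      rw [hsplit] at h3
      linarith
    have hHclose := hδ hdist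
    rw [Real.dist_eq] at hHclose
    have hH : binEntropy x - ε/2 ≤ binEntropy ((m:ℝ)/n) := by
      have := abs_lt.1 hHclose
      linarith [this.1]
    -- chain
    have hchoose : (2:ℝ) ^ (binEntropy ((m:ℝ)/n) * n) / ((n:ℝ)+1) ≤ (n.choose m : ℝ) := by
      rw [div_le_iff₀ (by positivity)]
      calc (2:ℝ) ^ (binEntropy ((m:ℝ)/n) * n) ≤ ((n:ℝ)+1) * (n.choose m : ℝ) :=
            lower_key n m hm1 hmn
        _ = (n.choose m : ℝ) * ((n:ℝ)+1) := by ring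
    have hsingle : (n.choose m : ℝ) ≤ ∑ k ∈ Finset.range (m + 1), (n.choose k : ℝ) :=
      Finset.single_le_sum (f := fun k => (n.choose k : ℝ)) (fun k _ => Nat.cast_nonneg _) (Finset.self_mem_range_succ m)
    have h2exp : (2:ℝ) ^ ((binEntropy x - ε) * n)
        ≤ (2:ℝ) ^ (binEntropy ((m:ℝ)/n) * n) / ((n:ℝ)+1) := by
      have e1 : (binEntropy x - ε) * n = (binEntropy x - ε/2) * n - (ε/2) * n := by ring
      rw [e1, Real.rpow_sub two_pos]
      apply div_le_div₀ (by positivity)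
      · apply Real.rpow_le_rpow_of_exponent_le one_le_two
        apply mul_le_mul_of_nonneg_right hH (by linarith)
      · linarith
      · exact hN n (by omega)
    calc (2:ℝ) ^ ((binEntropy x - ε) * n) ≤ (2:ℝ) ^ (binEntropy ((m:ℝ)/n) * n) / ((n:ℝ)+1) := h2exp
      _ ≤ (n.choose m : ℝ) := hchoose
      _ ≤ ∑ k ∈ Finset.range (m + 1), (n.choose k : ℝ) := hsingle
  · exact upper_key x hx0 hx n
end
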